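/- Let ψ, φ be C² and strictly positive on an open set G ⊆ ℝ^d with L ψ = −λψ and L* φ = −λφ, where L f = b·Df + (1/2) tr[a D²f] and L* is its formal adjoint. Define Ψ := −log ψ and the operator L_Y f := b·Df − Df·aDΨ + (1/2) tr[a D²f] with formal adjoint L_Y*. Then L_Y*(φψ)(x) = 0 for all x ∈ G. Equivalently, η := φψ is a stationary density for the generator L_Y. -/

import Mathlib

/-! Expanding the derivatives of `φψ` and of `Ψ = −log ψ` shows
`L_Y*(φψ) = ψ·L*φ − φ·Lψ` pointwise, for any C² functions with `ψ ≠ 0` and no eigenvalue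
equation: the correction `−aDψ/ψ` of the drift and the correction `∂_i(a_{ij}Ψ_{x_j})` of the
zeroth-order coefficient cancel, by the symmetry of `a`, the mixed terms `Dφ·aDψ` of `D²(φψ)`
and the terms `Dψ·aDψ/ψ` of `D²Ψ`. The two eigenvalue equations then give
`ψ·(−λφ) − φ·(−λψ) = 0`. -/

open Matrix

/-- Partial derivative `∂f/∂x_i` of `f : ℝ^d → ℝ`. -/
noncomputable def pd {d : ℕ} (f : (Fin d → ℝ) → ℝ) (i : Fin d) (x : Fin d → ℝ) : ℝ :=
  fderiv ℝ f x (Pi.single i 1)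

/-- Gradient of `f : ℝ^d → ℝ`. -/
noncomputable def grad {d : ℕ} (f : (Fin d → ℝ) → ℝ) (x : Fin d → ℝ) : Fin d → ℝ :=
  fun i => pd f i x

/-- Second partial derivative `∂²f/∂x_i∂x_j`. -/
noncomputable def pd2 {d : ℕ} (f : (Fin d → ℝ) → ℝ) (i j : Fin d) (x : Fin d → ℝ) : ℝ :=
  pd (pd f j) i x

/-- Hessian matrix of `f : ℝ^d → ℝ`. -/
noncomputable def hess {d : ℕ} (f : (Fin d → ℝ) → ℝ) (x : Fin d → ℝ) :
    Matrix (Fin d) (Fin d) ℝ :=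
  Matrix.of fun i j => pd2 f i j x


/-- The drift `β` of the formal adjoint `L*`: `β_i = −b_i + Σ_j ∂_j a_{ij}`. -/
noncomputable def betaOf {d : ℕ} (a : (Fin d → ℝ) → Matrix (Fin d) (Fin d) ℝ)
    (b : (Fin d → ℝ) → (Fin d → ℝ)) (x : Fin d → ℝ) : Fin d → ℝ :=
  fun i => -(b x i) + ∑ j, pd (fun y => a y i j) j x

/-- The zeroth order coefficient of `L*`:
`c = −(1/2)Σ_{i,j} ∂_i∂_j a_{ij} + Σ_i ∂_i b_i`. -/
noncomputable def cOf {d : ℕ} (a : (Fin d → ℝ) → Matrix (Fin d) (Fin d) ℝ)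
    (b : (Fin d → ℝ) → (Fin d → ℝ)) (x : Fin d → ℝ) : ℝ :=
  -(1 / 2) * ∑ i, ∑ j, pd2 (fun y => a y i j) i j x + ∑ i, pd (fun y => b y i) i x

open Topology

section PartialDerivatives

variable {d : ℕ} {f g : (Fin d → ℝ) → ℝ} {x : Fin d → ℝ}

lemma pd_congr_of_eventuallyEq (h : f =ᶠ[𝓝 x] g) (i : Fin d) : pd f i x = pd g i x := by
  rw [pd, pd, h.fderiv_eq]

lemma pd_neg (i : Fin d) : pd (fun y => -f y) i x = -pd f i x := by
  simp [pd, fderiv_fun_neg]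

lemma pd_add (hf : DifferentiableAt ℝ f x) (hg : DifferentiableAt ℝ g x) (i : Fin d) :
    pd (fun y => f y + g y) i x = pd f i x + pd g i x := by
  simp [pd, fderiv_fun_add hf hg]

lemma pd_mul (hf : DifferentiableAt ℝ f x) (hg : DifferentiableAt ℝ g x) (i : Fin d) :
    pd (fun y => f y * g y) i x = pd f i x * g x + f x * pd g i x := by
  simp [pd, fderiv_fun_mul hf hg]
  ring

lemma pd_inv (hf : DifferentiableAt ℝ f x) (hfx : f x ≠ 0) (i : Fin d) :
    pd (fun y => (f y)⁻¹) i x = -pd f i x / f x ^ 2 := by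
  have h : HasFDerivAt (fun y => (f y)⁻¹) ((-(f x ^ 2)⁻¹) • fderiv ℝ f x) x :=
    (hasDerivAt_inv hfx).comp_hasFDerivAt x hf.hasFDerivAt
  simp [pd, h.fderiv, div_eq_inv_mul]

lemma pd_log (hf : DifferentiableAt ℝ f x) (hfx : f x ≠ 0) (i : Fin d) :
    pd (fun y => Real.log (f y)) i x = pd f i x / f x := by
  simp [pd, (hf.hasFDerivAt.log hfx).fderiv, div_eq_inv_mul]

lemma ContDiffAt.differentiableAt_pd (hf : ContDiffAt ℝ 2 f x) (j : Fin d) :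
    DifferentiableAt ℝ (pd f j) x :=
  ((hf.fderiv_right (m := 1) (by norm_num)).differentiableAt one_ne_zero).clm_apply
    (differentiableAt_const _)

lemma ContDiffAt.eventually_differentiableAt (hf : ContDiffAt ℝ 2 f x) :
    ∀ᶠ y in 𝓝 x, DifferentiableAt ℝ f y :=
  (hf.eventually (by simp)).mono fun _ hy => hy.differentiableAt two_ne_zero

end PartialDerivatives

section GradientHessian

variable {d : ℕ} {f g : (Fin d → ℝ) → ℝ} {x : Fin d → ℝ}

lemma grad_neg : grad (fun y => -f y) x = -grad f x := by
  ext i; exact pd_neg i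

lemma hess_neg : hess (fun y => -f y) x = -hess f x := by
  ext i j
  have h : pd (fun y => -f y) j = fun y => -pd f j y := funext fun _ => pd_neg j
  simp only [hess, pd2, of_apply, h, pd_neg, Matrix.neg_apply]

lemma grad_mul (hf : DifferentiableAt ℝ f x) (hg : DifferentiableAt ℝ g x) :
    grad (fun y => f y * g y) x = g x • grad f x + f x • grad g x := by
  ext i; simp only [grad, pd_mul hf hg, Pi.add_apply, Pi.smul_apply, smul_eq_mul]; ring

lemma hess_mul (hf : ContDiffAt ℝ 2 f x) (hg : ContDiffAt ℝ 2 g x) :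
    hess (fun y => f y * g y) x = g x • hess f x + f x • hess g x
      + vecMulVec (grad g x) (grad f x) + vecMulVec (grad f x) (grad g x) := by
  ext i j
  have hpd : pd (fun y => f y * g y) j =ᶠ[𝓝 x] fun y => pd f j y * g y + f y * pd g j y := by
    filter_upwards [hf.eventually_differentiableAt, hg.eventually_differentiableAt]
      with y hfy hgy using pd_mul hfy hgy j
  have hf1 := hf.differentiableAt two_ne_zero
  have hg1 := hg.differentiableAt two_ne_zero
  have hf2 := hf.differentiableAt_pd j
  have hg2 := hg.differentiableAt_pd j
  rw [hess, of_apply, pd2, pd_congr_of_eventuallyEq hpd,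
    pd_add (hf2.fun_mul hg1) (hf1.fun_mul hg2), pd_mul hf2 hg1, pd_mul hf1 hg2]
  simp only [Matrix.add_apply, Matrix.smul_apply, hess, of_apply, pd2, smul_eq_mul,
    vecMulVec_apply, grad]
  ring

lemma grad_log (hf : DifferentiableAt ℝ f x) (hfx : f x ≠ 0) :
    grad (fun y => Real.log (f y)) x = (f x)⁻¹ • grad f x := by
  ext i; simp only [grad, pd_log hf hfx, Pi.smul_apply, smul_eq_mul]; ring

lemma hess_log (hf : ContDiffAt ℝ 2 f x) (hfx : f x ≠ 0) :
    hess (fun y => Real.log (f y)) x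
      = (f x)⁻¹ • hess f x - (f x ^ 2)⁻¹ • vecMulVec (grad f x) (grad f x) := by
  ext i j
  have hpd : pd (fun y => Real.log (f y)) j =ᶠ[𝓝 x] fun y => pd f j y * (f y)⁻¹ := by
    filter_upwards [hf.eventually_differentiableAt, hf.continuousAt.eventually_ne hfx]
      with y hfy hy using (pd_log hfy hy j).trans (div_eq_mul_inv _ _)
  have hf1 := hf.differentiableAt two_ne_zero
  rw [hess, of_apply, pd2, pd_congr_of_eventuallyEq hpd,
    pd_mul (hf.differentiableAt_pd j) (hf1.fun_inv hfx), pd_inv hf1 hfx]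
  simp only [Matrix.sub_apply, Matrix.smul_apply, hess, of_apply, pd2, smul_eq_mul,
    vecMulVec_apply, grad]
  field_simp
  ring

end GradientHessian

lemma sum_sum_pd_mul_pd {d : ℕ} {a : (Fin d → ℝ) → Matrix (Fin d) (Fin d) ℝ}
    {Ψ : (Fin d → ℝ) → ℝ} {x : Fin d → ℝ} (hsym : ∀ y, (a y).IsSymm)
    (ha : ∀ i j, DifferentiableAt ℝ (fun y => a y i j) x)
    (hΨ : ∀ j, DifferentiableAt ℝ (pd Ψ j) x) :
    ∑ i, ∑ j, pd (fun y => a y i j * pd Ψ j y) i x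
      = (fun i => ∑ j, pd (fun y => a y i j) j x) ⬝ᵥ grad Ψ x + (a x * hess Ψ x).trace := by
  have hswap : ∀ i j, (fun y => a y i j) = fun y => a y j i :=
    fun i j => funext fun y => (hsym y).apply j i
  simp only [pd_mul (ha _ _) (hΨ _), Finset.sum_add_distrib, dotProduct, Finset.sum_mul,
    trace, diag_apply, mul_apply, grad, hess, pd2, of_apply]
  congr 1
  · rw [Finset.sum_comm]
    simp only [hswap]
  · rw [Finset.sum_comm]
    simp only [(hsym x).apply]

lemma Matrix.IsSymm.mulVec_dotProduct_comm {ι R : Type*} [Fintype ι] [CommSemiring R]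
    {A : Matrix ι ι R} (hA : A.IsSymm) (p q : ι → R) : (A *ᵥ p) ⬝ᵥ q = (A *ᵥ q) ⬝ᵥ p := by
  rw [dotProduct_comm, dotProduct_mulVec, ← vecMul_transpose, hA.eq]

/-- The identity `twistedAdjoint_mul_eq` with the derivatives expanded: `u = ψ x`, `v = φ x`,
`p = Dψ`, `q = Dφ`, `P = D²ψ`, `Q = D²φ`, `D i = ∑ j, ∂_j a_{ij}`. -/
lemma twistedAdjoint_expanded_eq {ι : Type*} [Fintype ι] {A : Matrix ι ι ℝ} (hA : A.IsSymm)
    (b D p q : ι → ℝ) (P Q : Matrix ι ι ℝ) (c u v : ℝ) (hu : u ≠ 0) :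
    (fun i => -b i - (A *ᵥ p) i / u + D i) ⬝ᵥ (u • q + v • p)
      + 1 / 2 * (A * (u • Q + v • P + vecMulVec p q + vecMulVec q p)).trace
      - (c - (D ⬝ᵥ -(u⁻¹ • p) + (A * -(u⁻¹ • P - (u ^ 2)⁻¹ • vecMulVec p p)).trace)) * (v * u)
    = u * ((fun i => -b i + D i) ⬝ᵥ q + 1 / 2 * (A * Q).trace - c * v)
      - v * (b ⬝ᵥ p + 1 / 2 * (A * P).trace) := by
  have hβ : (fun i => -b i - (A *ᵥ p) i / u + D i) = -b - u⁻¹ • (A *ᵥ p) + D := by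
    ext i; simp only [Pi.add_apply, Pi.sub_apply, Pi.neg_apply, Pi.smul_apply, smul_eq_mul]; ring
  have hβ' : (fun i => -b i + D i) = -b + D := rfl
  rw [hβ, hβ']
  simp only [Matrix.mul_add, Matrix.mul_sub, Matrix.mul_neg, Matrix.mul_smul, trace_add,
    trace_sub, trace_neg, trace_smul, mul_vecMulVec, trace_vecMulVec, add_dotProduct,
    sub_dotProduct, neg_dotProduct, smul_dotProduct, dotProduct_add, dotProduct_smul,
    dotProduct_neg, smul_eq_mul, hA.mulVec_dotProduct_comm p q]
  field_simp
  ring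

theorem twistedAdjoint_mul_eq {d : ℕ} {a : (Fin d → ℝ) → Matrix (Fin d) (Fin d) ℝ}
    {b : (Fin d → ℝ) → (Fin d → ℝ)} {ψ φ : (Fin d → ℝ) → ℝ} {x : Fin d → ℝ}
    (hsym : ∀ y, (a y).IsSymm) (ha : ∀ i j, DifferentiableAt ℝ (fun y => a y i j) x)
    (hψ : ContDiffAt ℝ 2 ψ x) (hφ : ContDiffAt ℝ 2 φ x) (hψx : ψ x ≠ 0) :
    (fun i => -(b x i) - (a x).mulVec (grad ψ x) i / ψ x
        + ∑ j, pd (fun y => a y i j) j x) ⬝ᵥ grad (fun y => φ y * ψ y) x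
      + (1 / 2) * (a x * hess (fun y => φ y * ψ y) x).trace
      - (cOf a b x - ∑ i, ∑ j, pd (fun y => a y i j * pd (fun y => -Real.log (ψ y)) j y) i x)
        * (φ x * ψ x)
    = ψ x * (betaOf a b x ⬝ᵥ grad φ x + (1 / 2) * (a x * hess φ x).trace - cOf a b x * φ x)
      - φ x * (b x ⬝ᵥ grad ψ x + (1 / 2) * (a x * hess ψ x).trace) := by
  have hΨ : ContDiffAt ℝ 2 (fun y => -Real.log (ψ y)) x := (hψ.log hψx).neg
  rw [sum_sum_pd_mul_pd hsym ha hΨ.differentiableAt_pd, grad_neg, hess_neg,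
    grad_log (hψ.differentiableAt two_ne_zero) hψx, hess_log hψ hψx,
    grad_mul (hφ.differentiableAt two_ne_zero) (hψ.differentiableAt two_ne_zero),
    hess_mul hφ hψ]
  exact twistedAdjoint_expanded_eq (hsym x) _ _ _ _ _ _ _ _ _ hψx

theorem stmt7_general {d : ℕ} (G : Set (Fin d → ℝ)) (hG : IsOpen G)
    (a : (Fin d → ℝ) → Matrix (Fin d) (Fin d) ℝ) (hsym : ∀ x, (a x).IsSymm)
    (ha : ∀ i j, ContDiffOn ℝ 2 (fun y => a y i j) G)
    (b : (Fin d → ℝ) → (Fin d → ℝ))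
    (lam : ℝ) (ψ φ : (Fin d → ℝ) → ℝ)
    (hψ : ContDiffOn ℝ 2 ψ G) (hφ : ContDiffOn ℝ 2 φ G)
    (hψpos : ∀ x ∈ G, 0 < ψ x)
    (hψeig : ∀ x ∈ G,
      b x ⬝ᵥ grad ψ x + (1 / 2) * (a x * hess ψ x).trace = -lam * ψ x)
    (hφeig : ∀ x ∈ G,
      betaOf a b x ⬝ᵥ grad φ x + (1 / 2) * (a x * hess φ x).trace
        - cOf a b x * φ x = -lam * φ x)
    (Ψ : (Fin d → ℝ) → ℝ) (hΨ : Ψ = fun x => -Real.log (ψ x)) :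
    ∀ x ∈ G,
      (fun i => -(b x i) - (a x).mulVec (grad ψ x) i / ψ x
          + ∑ j, pd (fun y => a y i j) j x) ⬝ᵥ grad (fun y => φ y * ψ y) x
        + (1 / 2) * (a x * hess (fun y => φ y * ψ y) x).trace
        - (cOf a b x - ∑ i, ∑ j, pd (fun y => a y i j * pd Ψ j y) i x) * (φ x * ψ x)
      = 0 := by
  intro x hx
  subst hΨ
  have hGx := hG.mem_nhds hx
  rw [twistedAdjoint_mul_eq hsym
    (fun i j => ((ha i j).contDiffAt hGx).differentiableAt two_ne_zero)
    (hψ.contDiffAt hGx) (hφ.contDiffAt hGx) (hψpos x hx).ne', hφeig x hx, hψeig x hx]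
  ring

/-- if `Lψ = −λψ` and `L*φ = −λφ` with `ψ, φ > 0` C² on `G`, and
`Ψ := −log ψ`, then with `L_Y* h = β̂·Dh + (1/2)tr[a D²h] − ĉ h` (the formal adjoint of the
generator `L_Y f = b·Df − Df·aDΨ + (1/2)tr[a D²f]` of the controlled process), where
`β̂_i = −b_i − (aDψ)_i/ψ + Σ_j ∂_j a_{ij}` and `ĉ = c − Σ_{i,j} ∂_i(a_{ij} Ψ_{x_j})`,
one has `L_Y*(φψ) = 0` on `G`, i.e. `η = φψ` is a stationary density for `L_Y`. -/
theorem stmt7 {d : ℕ} (G : Set (Fin d → ℝ)) (hG : IsOpen G)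
    (a : (Fin d → ℝ) → Matrix (Fin d) (Fin d) ℝ) (hsym : ∀ x, (a x).IsSymm)
    (hapos : ∀ x ∈ G, (a x).PosDef) (ha : ∀ i j, ContDiffOn ℝ 2 (fun y => a y i j) G)
    (b : (Fin d → ℝ) → (Fin d → ℝ)) (hb : ∀ i, ContDiffOn ℝ 1 (fun y => b y i) G)
    (lam : ℝ) (ψ φ : (Fin d → ℝ) → ℝ)
    (hψ : ContDiffOn ℝ 2 ψ G) (hφ : ContDiffOn ℝ 2 φ G)
    (hψpos : ∀ x ∈ G, 0 < ψ x) (hφpos : ∀ x ∈ G, 0 < φ x)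
    (hψeig : ∀ x ∈ G,
      b x ⬝ᵥ grad ψ x + (1 / 2) * (a x * hess ψ x).trace = -lam * ψ x)
    (hφeig : ∀ x ∈ G,
      betaOf a b x ⬝ᵥ grad φ x + (1 / 2) * (a x * hess φ x).trace
        - cOf a b x * φ x = -lam * φ x)
    (Ψ : (Fin d → ℝ) → ℝ) (hΨ : Ψ = fun x => -Real.log (ψ x)) :
    ∀ x ∈ G,
      (fun i => -(b x i) - (a x).mulVec (grad ψ x) i / ψ x
          + ∑ j, pd (fun y => a y i j) j x) ⬝ᵥ grad (fun y => φ y * ψ y) x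
        + (1 / 2) * (a x * hess (fun y => φ y * ψ y) x).trace
        - (cOf a b x - ∑ i, ∑ j, pd (fun y => a y i j * pd Ψ j y) i x) * (φ x * ψ x)
      = 0 :=
  stmt7_general G hG a hsym ha b lam ψ φ hψ hφ hψpos hψeig hφeig Ψ hΨ
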